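/- arXiv:2206.11782 — 8 statements merged into one kernel-verified Lean document; each statement's English description precedes it below -/
import Mathlib

section
/- For every x ∈ ℝ³ with x ≠ 0, x ≠ a₁ and x ≠ a₂, one has K(x)² + H(x)·L(x) > 0. (In the supergravity interpretation: under the stated horizon and fixed-point inequalities, the invariant N = 1/(K² + H L) of the three-centred L(3,1) black lens is strictly positive everywhere on ℝ³ away from the three centres, with no collinearity assumption on the centres.) -/
open EuclideanSpace

/-!
Multiplying `K² + H L` by `r² r₁ r₂` leaves a polynomial in the three distances whose only
negative terms are `-r² r₁ - r² r₂ - (k₁ - k₂)² r²`. The fixed-point inequalities say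
`3 kᵢ² - l₀ > ‖aᵢ‖ (1 + (k₁ - k₂)² / ‖a₁ - a₂‖)`; combined with Ptolemy's inequality for the
quadrangle `a₁, x, a₂, 0` they absorb `(k₁ - k₂)² r²`, and the triangle inequalities
`r ≤ rᵢ + ‖aᵢ‖` then absorb the remaining negative terms, leaving `3 l₀ r₁ r₂ + r r₁ r₂`,
which is positive because the horizon inequality forces `l₀ > 0`.
-/

lemma nonneg_of_three_mul_pow_three_sub_nine_mul_sq_pos {l m : ℝ}
    (h : 3 * l ^ 3 - 9 * m ^ 2 > 0) : 0 ≤ l :=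
  ((Odd.pow_pos_iff (by decide)).1 (by nlinarith [sq_nonneg m] : 0 < l ^ 3)).le

lemma mul_one_add_div_lt_of_neg_one_add_div_sub_div_pos {A B c D : ℝ} (hA : 0 < A)
    (h : -1 + B / A - c / D > 0) : A * (1 + c / D) < B :=
  (lt_div_iff₀' hA).1 (by linarith)

lemma norm_sub_mul_norm_le {V : Type*} [NormedAddCommGroup V] [InnerProductSpace ℝ V]
    (a₁ a₂ x : V) : ‖a₁ - a₂‖ * ‖x‖ ≤ ‖a₁‖ * ‖x - a₂‖ + ‖a₂‖ * ‖x - a₁‖ := by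
  have h := EuclideanGeometry.mul_dist_le_mul_dist_add_mul_dist a₁ x a₂ 0
  simp only [dist_eq_norm, sub_zero, norm_sub_rev a₁ x] at h
  linarith

lemma lens_invariant_eq_div (k₁ k₂ l₀ : ℝ) {r r₁ r₂ : ℝ} (hr : r ≠ 0) (hr₁ : r₁ ≠ 0)
    (hr₂ : r₂ ≠ 0) :
    (k₁ / r₁ + k₂ / r₂) ^ 2
        + (3 / r - 1 / r₁ - 1 / r₂) * (1 + l₀ / r + k₁ ^ 2 / r₁ + k₂ ^ 2 / r₂)
      = (3 * l₀ * r₁ * r₂ + (3 * k₁ ^ 2 - l₀) * r * r₂ + (3 * k₂ ^ 2 - l₀) * r * r₁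
          + 3 * r * r₁ * r₂ - r ^ 2 * r₂ - r ^ 2 * r₁ - (k₁ - k₂) ^ 2 * r ^ 2)
        / (r ^ 2 * r₁ * r₂) := by
  field_simp
  ring

lemma lens_numerator_pos {l c B₁ B₂ r r₁ r₂ A₁ A₂ D : ℝ} (hl : 0 ≤ l) (hc : 0 ≤ c)
    (hr : 0 < r) (hr₁ : 0 < r₁) (hr₂ : 0 < r₂) (hD : 0 < D)
    (htri₁ : r ≤ r₁ + A₁) (htri₂ : r ≤ r₂ + A₂) (hptol : D * r ≤ A₁ * r₂ + A₂ * r₁)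
    (hB₁ : A₁ * (1 + c / D) < B₁) (hB₂ : A₂ * (1 + c / D) < B₂) :
    0 < 3 * l * r₁ * r₂ + B₁ * r * r₂ + B₂ * r * r₁ + 3 * r * r₁ * r₂
        - r ^ 2 * r₂ - r ^ 2 * r₁ - c * r ^ 2 := by
  have e₁ := mul_lt_mul_of_pos_right hB₁ (mul_pos hr hr₂)
  have e₂ := mul_lt_mul_of_pos_right hB₂ (mul_pos hr hr₁)
  have hptol' : c * r * r ≤ (A₁ * r₂ + A₂ * r₁) * (c / D * r) := by
    have := mul_le_mul_of_nonneg_right hptol (by positivity : 0 ≤ c / D * r)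
    rwa [show D * r * (c / D * r) = c * r * r by field_simp] at this
  have t₁ := mul_le_mul_of_nonneg_right htri₁ (mul_pos hr hr₂).le
  have t₂ := mul_le_mul_of_nonneg_right htri₂ (mul_pos hr hr₁).le
  linarith [mul_nonneg (mul_nonneg hl hr₁.le) hr₂.le, mul_pos (mul_pos hr hr₁) hr₂]

/-- **Positivity of the invariant `N⁻¹ = K² + H·L` for the three-centred `L(3,1)` black lens.**
Work in `ℝ³ = EuclideanSpace ℝ (Fin 3)` with centres `0, a₁, a₂`.  Under the horizon
inequality and the two fixed-point inequalities, `K(x)² + H(x)·L(x) > 0` for every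
`x` away from the three centres, with no collinearity assumption. -/
theorem blackLens_N_pos
    (a₁ a₂ : EuclideanSpace ℝ (Fin 3))
    (ha₁ : a₁ ≠ 0) (ha₂ : a₂ ≠ 0) (ha₁₂ : a₁ ≠ a₂)
    (k₁ k₂ l₀ m₀ : ℝ)
    (hhor : 3 * l₀ ^ 3 - 9 * m₀ ^ 2 > 0)
    (hfix₁ : -1 + (3 * k₁ ^ 2 - l₀) / ‖a₁‖ - (k₁ - k₂) ^ 2 / ‖a₁ - a₂‖ > 0)
    (hfix₂ : -1 + (3 * k₂ ^ 2 - l₀) / ‖a₂‖ - (k₁ - k₂) ^ 2 / ‖a₁ - a₂‖ > 0) :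
    ∀ x : EuclideanSpace ℝ (Fin 3), x ≠ 0 → x ≠ a₁ → x ≠ a₂ →
      (k₁ / ‖x - a₁‖ + k₂ / ‖x - a₂‖) ^ 2
        + (3 / ‖x‖ - 1 / ‖x - a₁‖ - 1 / ‖x - a₂‖)
          * (1 + l₀ / ‖x‖ + k₁ ^ 2 / ‖x - a₁‖ + k₂ ^ 2 / ‖x - a₂‖) > 0 := by
  intro x hx hx₁ hx₂
  have hr : 0 < ‖x‖ := norm_pos_iff.2 hx
  have hr₁ : 0 < ‖x - a₁‖ := norm_pos_iff.2 (sub_ne_zero.2 hx₁)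
  have hr₂ : 0 < ‖x - a₂‖ := norm_pos_iff.2 (sub_ne_zero.2 hx₂)
  have htri (a : EuclideanSpace ℝ (Fin 3)) : ‖x‖ ≤ ‖x - a‖ + ‖a‖ := by
    simpa using norm_sub_le_norm_sub_add_norm_sub x a 0
  rw [lens_invariant_eq_div k₁ k₂ l₀ hr.ne' hr₁.ne' hr₂.ne']
  refine div_pos (lens_numerator_pos (nonneg_of_three_mul_pow_three_sub_nine_mul_sq_pos hhor)
    (sq_nonneg _) hr hr₁ hr₂ (norm_pos_iff.2 (sub_ne_zero.2 ha₁₂)) (htri a₁) (htri a₂)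
    (norm_sub_mul_norm_le a₁ a₂ x) ?_ ?_) (by positivity)
  · exact mul_one_add_div_lt_of_neg_one_add_div_sub_div_pos (norm_pos_iff.2 ha₁) hfix₁
  · exact mul_one_add_div_lt_of_neg_one_add_div_sub_div_pos (norm_pos_iff.2 ha₂) hfix₂
end

section
/- For every x ∈ ℝ³ with x ≠ 0, x ≠ a₁ and x ≠ a₂, one has the strict lower bound K(x)² + H(x)·L(x) > (k₁ − k₂)²·( ‖a₁‖/(‖a₁ − a₂‖·r·r₁) + ‖a₂‖/(‖a₁ − a₂‖·r·r₂) − 1/(r₁·r₂) ) + 3·l₀/r² + ( 3/r + ‖a₁‖/(r·r₁) + ‖a₂‖/(r·r₂) − 1/r₁ − 1/r₂ ). -/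
/-!
Writing `fᵢ := -1 + (3 kᵢ² - l₀)/‖aᵢ‖ - (k₁ - k₂)²/‖a₁ - a₂‖` for the fixed-point quantities,
the difference of the two sides is the rational identity
`K² + H L - RHS = ‖a₁‖ f₁ / (r r₁) + ‖a₂‖ f₂ / (r r₂)`: the `(k₁ - k₂)²/(r₁ r₂)` terms cancel
because `(k₁/r₁ + k₂/r₂)² - (1/r₁ + 1/r₂)(k₁²/r₁ + k₂²/r₂) = -(k₁ - k₂)²/(r₁ r₂)`.
Both summands are positive, since `fᵢ > 0` forces `‖aᵢ‖ > 0`.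
-/

theorem pos_of_neg_one_add_div_sub_div_pos {A B c d : ℝ} (hA : 0 ≤ A) (hB : 0 ≤ B)
    (hd : 0 ≤ d) (h : 0 < -1 + c / A - d / B) : 0 < A := by
  refine hA.lt_of_ne fun hA₀ => ?_
  rw [← hA₀, div_zero] at h
  linarith [div_nonneg hd hB]

namespace BlackLens

variable {r r₁ r₂ A₁ A₂ B : ℝ} (k₁ k₂ l₀ : ℝ)

theorem invariant_sub_bound_eq (hr : r ≠ 0) (h₁ : r₁ ≠ 0) (h₂ : r₂ ≠ 0)
    (hA₁ : A₁ ≠ 0) (hA₂ : A₂ ≠ 0) :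
    (k₁ / r₁ + k₂ / r₂) ^ 2
        + (3 / r - 1 / r₁ - 1 / r₂) * (1 + l₀ / r + k₁ ^ 2 / r₁ + k₂ ^ 2 / r₂)
      - ((k₁ - k₂) ^ 2 * (A₁ / (B * r * r₁) + A₂ / (B * r * r₂) - 1 / (r₁ * r₂))
        + 3 * l₀ / r ^ 2 + (3 / r + A₁ / (r * r₁) + A₂ / (r * r₂) - 1 / r₁ - 1 / r₂))
    = A₁ * (-1 + (3 * k₁ ^ 2 - l₀) / A₁ - (k₁ - k₂) ^ 2 / B) / (r * r₁)
      + A₂ * (-1 + (3 * k₂ ^ 2 - l₀) / A₂ - (k₁ - k₂) ^ 2 / B) / (r * r₂) := by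
  field_simp
  ring

variable {k₁ k₂ l₀}

theorem invariant_gt_bound (hr : 0 < r) (h₁ : 0 < r₁) (h₂ : 0 < r₂)
    (hA₁ : 0 ≤ A₁) (hA₂ : 0 ≤ A₂) (hB : 0 ≤ B)
    (hf₁ : -1 + (3 * k₁ ^ 2 - l₀) / A₁ - (k₁ - k₂) ^ 2 / B > 0)
    (hf₂ : -1 + (3 * k₂ ^ 2 - l₀) / A₂ - (k₁ - k₂) ^ 2 / B > 0) :
    (k₁ / r₁ + k₂ / r₂) ^ 2
        + (3 / r - 1 / r₁ - 1 / r₂) * (1 + l₀ / r + k₁ ^ 2 / r₁ + k₂ ^ 2 / r₂)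
      > (k₁ - k₂) ^ 2 * (A₁ / (B * r * r₁) + A₂ / (B * r * r₂) - 1 / (r₁ * r₂))
        + 3 * l₀ / r ^ 2 + (3 / r + A₁ / (r * r₁) + A₂ / (r * r₂) - 1 / r₁ - 1 / r₂) := by
  have hA₁ := pos_of_neg_one_add_div_sub_div_pos hA₁ hB (sq_nonneg _) hf₁
  have hA₂ := pos_of_neg_one_add_div_sub_div_pos hA₂ hB (sq_nonneg _) hf₂
  have hdiff := invariant_sub_bound_eq k₁ k₂ l₀ (B := B) hr.ne' h₁.ne' h₂.ne' hA₁.ne' hA₂.ne'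
  have hpos := add_pos (div_pos (mul_pos hA₁ hf₁) (mul_pos hr h₁))
    (div_pos (mul_pos hA₂ hf₂) (mul_pos hr h₂))
  linarith

end BlackLens

theorem blackLens_N_lower_bound_general
    (a₁ a₂ : EuclideanSpace ℝ (Fin 3))
    (k₁ k₂ l₀ : ℝ)
    (hfix₁ : -1 + (3 * k₁ ^ 2 - l₀) / ‖a₁‖ - (k₁ - k₂) ^ 2 / ‖a₁ - a₂‖ > 0)
    (hfix₂ : -1 + (3 * k₂ ^ 2 - l₀) / ‖a₂‖ - (k₁ - k₂) ^ 2 / ‖a₁ - a₂‖ > 0) :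
    ∀ x : EuclideanSpace ℝ (Fin 3), x ≠ 0 → x ≠ a₁ → x ≠ a₂ →
      (k₁ / ‖x - a₁‖ + k₂ / ‖x - a₂‖) ^ 2
        + (3 / ‖x‖ - 1 / ‖x - a₁‖ - 1 / ‖x - a₂‖)
          * (1 + l₀ / ‖x‖ + k₁ ^ 2 / ‖x - a₁‖ + k₂ ^ 2 / ‖x - a₂‖)
      > (k₁ - k₂) ^ 2 *
          (‖a₁‖ / (‖a₁ - a₂‖ * ‖x‖ * ‖x - a₁‖)
            + ‖a₂‖ / (‖a₁ - a₂‖ * ‖x‖ * ‖x - a₂‖)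
            - 1 / (‖x - a₁‖ * ‖x - a₂‖))
        + 3 * l₀ / ‖x‖ ^ 2
        + (3 / ‖x‖ + ‖a₁‖ / (‖x‖ * ‖x - a₁‖) + ‖a₂‖ / (‖x‖ * ‖x - a₂‖)
            - 1 / ‖x - a₁‖ - 1 / ‖x - a₂‖) := by
  intro x hx hx₁ hx₂
  exact BlackLens.invariant_gt_bound (norm_pos_iff.mpr hx)
    (norm_pos_iff.mpr (sub_ne_zero.mpr hx₁)) (norm_pos_iff.mpr (sub_ne_zero.mpr hx₂))
    (norm_nonneg _) (norm_nonneg _) (norm_nonneg _) hfix₁ hfix₂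

/-- **Lower bound on the invariant `N⁻¹ = K² + H·L` of the three-centred `L(3,1)` black lens.**
Using the fixed-point inequalities at the two centres `a₁, a₂`, for every `x` away from the
three centres one obtains the strict lower bound
`K² + H·L > (k₁−k₂)²(‖a₁‖/(‖a₁−a₂‖ r r₁) + ‖a₂‖/(‖a₁−a₂‖ r r₂) − 1/(r₁ r₂))
  + 3 l₀ / r² + (3/r + ‖a₁‖/(r r₁) + ‖a₂‖/(r r₂) − 1/r₁ − 1/r₂)`. -/
theorem blackLens_N_lower_bound
    (a₁ a₂ : EuclideanSpace ℝ (Fin 3))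
    (ha₁ : a₁ ≠ 0) (ha₂ : a₂ ≠ 0) (ha₁₂ : a₁ ≠ a₂)
    (k₁ k₂ l₀ : ℝ)
    (hfix₁ : -1 + (3 * k₁ ^ 2 - l₀) / ‖a₁‖ - (k₁ - k₂) ^ 2 / ‖a₁ - a₂‖ > 0)
    (hfix₂ : -1 + (3 * k₂ ^ 2 - l₀) / ‖a₂‖ - (k₁ - k₂) ^ 2 / ‖a₁ - a₂‖ > 0) :
    ∀ x : EuclideanSpace ℝ (Fin 3), x ≠ 0 → x ≠ a₁ → x ≠ a₂ →
      (k₁ / ‖x - a₁‖ + k₂ / ‖x - a₂‖) ^ 2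
        + (3 / ‖x‖ - 1 / ‖x - a₁‖ - 1 / ‖x - a₂‖)
          * (1 + l₀ / ‖x‖ + k₁ ^ 2 / ‖x - a₁‖ + k₂ ^ 2 / ‖x - a₂‖)
      > (k₁ - k₂) ^ 2 *
          (‖a₁‖ / (‖a₁ - a₂‖ * ‖x‖ * ‖x - a₁‖)
            + ‖a₂‖ / (‖a₁ - a₂‖ * ‖x‖ * ‖x - a₂‖)
            - 1 / (‖x - a₁‖ * ‖x - a₂‖))
        + 3 * l₀ / ‖x‖ ^ 2
        + (3 / ‖x‖ + ‖a₁‖ / (‖x‖ * ‖x - a₁‖) + ‖a₂‖ / (‖x‖ * ‖x - a₂‖)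
            - 1 / ‖x - a₁‖ - 1 / ‖x - a₂‖) :=
  blackLens_N_lower_bound_general a₁ a₂ k₁ k₂ l₀ hfix₁ hfix₂
end

section
/- The additive subgroup of ℝ² generated by {P, R} equals the additive subgroup generated by {Q, S} if and only if (h = p or h = −p), χ₀ is an integer whose sum with p is even, and p divides q + 1. (This is the condition under which the asymptotic identifications of the Gibbons–Hawking angles match the identification lattice of a lens space L(p,q), forcing h = ±p, χ₀ ≡ h mod 2 and q ≡ −1 mod p, so that the horizon topology is L(|h|,1).) -/
open Real

private lemma mem_pair_iff (x y z w a b : ℝ) :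
    (a, b) ∈ AddSubgroup.closure ({(x, y), (z, w)} : Set (ℝ × ℝ)) ↔
      ∃ m n : ℤ, (m : ℝ) * x + n * z = a ∧ (m : ℝ) * y + n * w = b := by
  rw [AddSubgroup.mem_closure_pair]
  simp [Prod.ext_iff]

set_option maxHeartbeats 1000000 in
/-- **Matching of the asymptotic identification lattice with a lens space lattice.**
With `P = (−2π/h, 2π/h)`, `R = (π(h−χ₀)/h, π(h+χ₀)/h)` coming from asymptotic flatness, and
`Q = (2π/p, 2πq/p)`, `S = (0, 2π)` generating the identification lattice of the lens space
`L(p,q)`, the additive subgroup of `ℝ²` generated by `{P, R}` equals the one generated by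
`{Q, S}` if and only if `h = ±p`, `χ₀` is an integer with `χ₀ + p` even, and `p ∣ q + 1`. -/
theorem lens_space_lattice_matching
    (h χ₀ : ℝ) (hh : h ≠ 0) (p : ℕ) (hp : 0 < p) (q : ℤ)
    (hpq : Int.gcd (p : ℤ) q = 1) :
    AddSubgroup.closure ({(-(2 * π) / h, 2 * π / h),
        (π * (h - χ₀) / h, π * (h + χ₀) / h)} : Set (ℝ × ℝ)) =
      AddSubgroup.closure ({(2 * π / p, 2 * π * q / p), (0, 2 * π)} : Set (ℝ × ℝ))
    ↔ (h = (p : ℝ) ∨ h = -(p : ℝ))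
      ∧ (∃ n : ℤ, χ₀ = (n : ℝ) ∧ Even (n + (p : ℤ)))
      ∧ (p : ℤ) ∣ q + 1 := by
  have hπ : π ≠ 0 := Real.pi_ne_zero
  have hπ0 : 0 < π := Real.pi_pos
  have hpR : (p : ℝ) ≠ 0 := Nat.cast_ne_zero.mpr hp.ne'
  constructor
  · intro heq
    have hP : ((-(2 * π) / h, 2 * π / h) : ℝ × ℝ) ∈
        AddSubgroup.closure ({(2 * π / p, 2 * π * q / p), (0, 2 * π)} : Set (ℝ × ℝ)) := by
      rw [← heq]; exact AddSubgroup.subset_closure (by left; rfl)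
    have hQ : ((2 * π / p, 2 * π * q / p) : ℝ × ℝ) ∈
        AddSubgroup.closure ({(-(2 * π) / h, 2 * π / h),
          (π * (h - χ₀) / h, π * (h + χ₀) / h)} : Set (ℝ × ℝ)) := by
      rw [heq]; exact AddSubgroup.subset_closure (by left; rfl)
    have hS : ((0, 2 * π) : ℝ × ℝ) ∈
        AddSubgroup.closure ({(-(2 * π) / h, 2 * π / h),
          (π * (h - χ₀) / h, π * (h + χ₀) / h)} : Set (ℝ × ℝ)) := by
      rw [heq]; exact AddSubgroup.subset_closure (by right; rfl)
    rw [mem_pair_iff] at hP hQ hS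
    obtain ⟨m, n, hP1, hP2⟩ := hP
    obtain ⟨a, b, hQ1, hQ2⟩ := hQ
    obtain ⟨c, d, hS1, hS2⟩ := hS
    have h2πhh : (2 * π * h * h : ℝ) ≠ 0 :=
      mul_ne_zero (mul_ne_zero (mul_ne_zero two_ne_zero hπ) hh) hh
    have hπh : (π * h : ℝ) ≠ 0 := mul_ne_zero hπ hh
    have h2πh : (2 * π * h : ℝ) ≠ 0 := mul_ne_zero (mul_ne_zero two_ne_zero hπ) hh
    -- derive the real equations
    have E1 : (m : ℝ) * h = -(p : ℝ) := by
      field_simp at hP1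
      nlinarith [hπ0, hP1]
    have E3 : (d : ℝ) = 1 := by
      field_simp at hS1 hS2
      have key : (d : ℝ) * (2 * π * h * h) = 1 * (2 * π * h * h) := by
        linear_combination h * hS1 + π * h * hS2
      exact mul_right_cancel₀ h2πhh key
    have E4 : χ₀ = h - 2 * c := by
      rw [E3] at hS1
      field_simp at hS1
      have key : χ₀ * (π * h) = (h - 2 * c) * (π * h) := by
        linear_combination -h * hS1
      exact mul_right_cancel₀ hπh key
    have E5 : (b : ℝ) * p = 1 + q := by
      field_simp at hQ1 hQ2
      have key : ((b : ℝ) * p) * (2 * π * h * h) = (1 + (q : ℝ)) * (2 * π * h * h) := by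
        linear_combination π * h * hQ1 + π * h * hQ2
      exact mul_right_cancel₀ h2πhh key
    have E6 : h = (p : ℝ) * ((b : ℝ) * c - a) := by
      rw [E4] at hQ1
      field_simp at hQ1
      have key : h * (2 * π * h) = ((p : ℝ) * ((b : ℝ) * c - a)) * (2 * π * h) := by
        linear_combination -π * h * hQ1
      exact mul_right_cancel₀ h2πh key
    -- integer consequences
    have hdvd : (p : ℤ) ∣ q + 1 := ⟨b, by
      have : ((b : ℤ) * p : ℤ) = 1 + q := by exact_mod_cast E5
      linarith⟩
    have hmu : m * (b * c - a) = -1 := by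
      have hre : (m : ℝ) * ((b : ℝ) * c - a) = -1 := by
        have h1 : (m : ℝ) * ((p : ℝ) * ((b : ℝ) * c - a)) = -(p : ℝ) := by
          rw [← E6]; exact E1
        have h2 : (p : ℝ) * ((m : ℝ) * ((b : ℝ) * c - a)) = (p : ℝ) * (-1) := by
          linear_combination h1
        exact mul_left_cancel₀ hpR h2
      exact_mod_cast hre
    have hu : b * c - a = 1 ∨ b * c - a = -1 := by
      have : IsUnit (b * c - a) := IsUnit.of_mul_eq_one (-m) (by linarith [hmu])
      exact Int.isUnit_iff.mp this
    rcases hu with hu | hu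
    · have hhp : h = (p : ℝ) := by
        rw [E6, show ((b : ℝ) * c - a) = ((b * c - a : ℤ) : ℝ) by push_cast; ring, hu]
        norm_num
      refine ⟨Or.inl hhp, ⟨(p : ℤ) - 2 * c, ?_, ⟨(p : ℤ) - c, by ring⟩⟩, hdvd⟩
      rw [E4, hhp]; push_cast; ring
    · have hhp : h = -(p : ℝ) := by
        rw [E6, show ((b : ℝ) * c - a) = ((b * c - a : ℤ) : ℝ) by push_cast; ring, hu]
        norm_num
      refine ⟨Or.inr hhp, ⟨-(p : ℤ) - 2 * c, ?_, ⟨-c, by ring⟩⟩, hdvd⟩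
      rw [E4, hhp]; push_cast; ring
  · rintro ⟨hε, ⟨n₀, hχ, ⟨r, hr⟩⟩, ⟨t, ht⟩⟩
    have hχR : χ₀ = 2 * (r : ℝ) - p := by
      rw [hχ]
      have : (n₀ : ℝ) + p = r + r := by exact_mod_cast congrArg (Int.cast : ℤ → ℝ) hr
      linarith
    have hqR : (q : ℝ) = (p : ℝ) * t - 1 := by
      have : ((q : ℤ) : ℝ) + 1 = ((p : ℤ) : ℝ) * t := by
        exact_mod_cast congrArg (Int.cast : ℤ → ℝ) ht
      push_cast at this; linarith
    apply le_antisymm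
    · rw [AddSubgroup.closure_le]
      intro v hv
      simp only [Set.mem_insert_iff, Set.mem_singleton_iff] at hv
      rcases hv with rfl | rfl
      · -- P ∈ Λ₂
        rw [SetLike.mem_coe, mem_pair_iff]
        rcases hε with hε | hε
        · refine ⟨-1, t, ?_, ?_⟩
          · rw [hε]; push_cast; (try simp only [div_neg, neg_div]); field_simp; ring
          · rw [hε]; push_cast; rw [hqR]; (try simp only [div_neg, neg_div]); field_simp; ring
        · refine ⟨1, -t, ?_, ?_⟩
          · rw [hε]; push_cast; (try simp only [div_neg, neg_div]); field_simp; ring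
          · rw [hε]; push_cast; rw [hqR]; (try simp only [div_neg, neg_div]); field_simp; ring
      · -- R ∈ Λ₂
        rw [SetLike.mem_coe, mem_pair_iff]
        rcases hε with hε | hε
        · refine ⟨(p : ℤ) - r, 1 - ((p : ℤ) - r) * t, ?_, ?_⟩
          · rw [hε, hχR]; push_cast; (try simp only [div_neg, neg_div]); field_simp; ring
          · rw [hε, hχR]; push_cast; rw [hqR]; (try simp only [div_neg, neg_div]); field_simp; ring
        · refine ⟨r, 1 - r * t, ?_, ?_⟩
          · rw [hε, hχR]; push_cast; (try simp only [div_neg, neg_div]); field_simp; ring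
          · rw [hε, hχR]; push_cast; rw [hqR]; (try simp only [div_neg, neg_div]); field_simp; ring
    · rw [AddSubgroup.closure_le]
      intro v hv
      simp only [Set.mem_insert_iff, Set.mem_singleton_iff] at hv
      rcases hv with rfl | rfl
      · -- Q ∈ Λ₁
        rw [SetLike.mem_coe, mem_pair_iff]
        rcases hε with hε | hε
        · refine ⟨t * ((p : ℤ) - r) - 1, t, ?_, ?_⟩
          · rw [hε, hχR]; push_cast; (try simp only [div_neg, neg_div]); field_simp; ring
          · rw [hε, hχR]; push_cast; rw [hqR]; (try simp only [div_neg, neg_div]); field_simp; ring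
        · refine ⟨t * (-r) + 1, t, ?_, ?_⟩
          · rw [hε, hχR]; push_cast; (try simp only [div_neg, neg_div]); field_simp; ring
          · rw [hε, hχR]; push_cast; rw [hqR]; (try simp only [div_neg, neg_div]); field_simp; ring
      · -- S ∈ Λ₁
        rw [SetLike.mem_coe, mem_pair_iff]
        rcases hε with hε | hε
        · refine ⟨(p : ℤ) - r, 1, ?_, ?_⟩
          · rw [hε, hχR]; push_cast; (try simp only [div_neg, neg_div]); field_simp; ring
          · rw [hε, hχR]; push_cast; (try simp only [div_neg, neg_div]); field_simp; ring
        · refine ⟨-r, 1, ?_, ?_⟩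
          · rw [hε, hχR]; push_cast; (try simp only [div_neg, neg_div]); field_simp; ring
          · rw [hε, hχR]; push_cast; (try simp only [div_neg, neg_div]); field_simp; ring
end

section
/- The determinant of the linear map A : ℝ³ → ℝ³ defined by A v := (2s/(3Δ))·⟨x̂, v⟩·x̂ + Δ·v + (√s/2)·(x̂ × v) equals (2s + 3Δ²)(s + 4Δ²)/(12Δ). (In matrix form, A_{mj} = (2h²/(3Δ)) x̂_j x̂_m + Δ δ_{jm} + (√(h²)/2) ε_{ijm} x̂_i with s = h²; since s ≥ 0 and Δ ≠ 0 this determinant is nonzero, which forces the coefficients W_i in the near-horizon expansion of the axial Killing field to vanish.) -/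
open scoped RealInnerProductSpace

/-- The cross product on `ℝ³ = EuclideanSpace ℝ (Fin 3)` (via the identification with
`Fin 3 → ℝ`). -/
noncomputable def cross3 (a b : EuclideanSpace ℝ (Fin 3)) : EuclideanSpace ℝ (Fin 3) :=
  (WithLp.equiv 2 (Fin 3 → ℝ)).symm
    (crossProduct (WithLp.equiv 2 (Fin 3 → ℝ) a) (WithLp.equiv 2 (Fin 3 → ℝ) b))

set_option maxRecDepth 8000 in
/-- **Determinant of the near-horizon matrix `A`.**
For a unit vector `xhat ∈ ℝ³`, `Δ ≠ 0` and `s ≥ 0`, the linear map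
`A v = (2s/(3Δ)) ⟨xhat, v⟩ xhat + Δ v + (√s/2) (xhat × v)` has determinant
`(2s + 3Δ²)(s + 4Δ²)/(12Δ)`. -/
theorem det_nearHorizon_matrix
    (xhat : EuclideanSpace ℝ (Fin 3)) (hx : ‖xhat‖ = 1)
    (Δ s : ℝ) (hΔ : Δ ≠ 0) (hs : 0 ≤ s)
    (A : EuclideanSpace ℝ (Fin 3) →ₗ[ℝ] EuclideanSpace ℝ (Fin 3))
    (hA : ∀ v, A v = (2 * s / (3 * Δ)) • (⟪xhat, v⟫ • xhat) + Δ • v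
        + (Real.sqrt s / 2) • cross3 xhat v) :
    LinearMap.det A = (2 * s + 3 * Δ ^ 2) * (s + 4 * Δ ^ 2) / (12 * Δ) := by
  set c := 2 * s / (3 * Δ) with hc
  set r := Real.sqrt s / 2 with hr
  set x0 := xhat 0; set x1 := xhat 1; set x2 := xhat 2
  rw [← LinearMap.det_toMatrix (EuclideanSpace.basisFun (Fin 3) ℝ).toBasis A]
  have hM : (LinearMap.toMatrix (EuclideanSpace.basisFun (Fin 3) ℝ).toBasis
      (EuclideanSpace.basisFun (Fin 3) ℝ).toBasis A) =
      !![c*x0*x0 + Δ, c*x1*x0 - r*x2, c*x2*x0 + r*x1;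
         c*x0*x1 + r*x2, c*x1*x1 + Δ, c*x2*x1 - r*x0;
         c*x0*x2 - r*x1, c*x1*x2 + r*x0, c*x2*x2 + Δ] := by
    ext i j
    fin_cases i <;> fin_cases j <;>
      simp [LinearMap.toMatrix_apply, hA, cross3, crossProduct, PiLp.inner_apply,
        EuclideanSpace.basisFun_apply, EuclideanSpace.single_apply, Fin.sum_univ_three] <;>
      ring
  rw [hM]
  have hsq : Real.sqrt s * Real.sqrt s = s := Real.mul_self_sqrt hs
  have hnorm : x0 * x0 + x1 * x1 + x2 * x2 = 1 := by
    have h1 : ⟪xhat, xhat⟫ = 1 := by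
      rw [real_inner_self_eq_norm_sq, hx]; norm_num
    rw [PiLp.inner_apply, Fin.sum_univ_three] at h1; simp at h1; rw [← sq, ← sq, ← sq]; exact h1
  rw [Matrix.det_fin_three, hc, hr]
  norm_num [Matrix.cons_val_one, Matrix.cons_val_two]
  have hinv : Δ * Δ⁻¹ = 1 := mul_inv_cancel₀ hΔ
  clear_value x0 x1 x2 c r
  linear_combination ((2*s/(3*Δ))*Δ^2 + (Real.sqrt s*Real.sqrt s/4)*((2*s/(3*Δ))*(x0*x0+x1*x1+x2*x2+1)+Δ)) * hnorm + ((2*s/(3*Δ)+Δ)/4) * hsq - (s*Δ/4 + Δ^3) * hinv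
end

section
/- Let β ∈ ℝ with β > β₃ and β ≠ β₁ satisfy ρ²/(β − β₁) + z²/(β − β₃) = C. Then 1/( |β − β₁| · √(β − β₃) · ( ρ²/(β − β₁)² + z²/(β − β₃)² ) ) equals (1/(2√C))·( 1/√(ρ² + (z − a)²) + 1/√(ρ² + (z + a)²) ) if β > β₁, and equals (1/(2√C))·| 1/√(ρ² + (z − a)²) − 1/√(ρ² + (z + a)²) | if β₃ < β < β₁. (This identifies the BGPP harmonic function H = (∏ᵢ(β−βᵢ))^{−1/2}(∑ᵢ xᵢ²/(β−βᵢ)²)^{−1} in the degenerate case β₁ = β₂ with a two-centred harmonic function 1/(2√C)(1/|x−a| ± 1/|x+a|) with centres at (0,0,±a); the + sign with C = 1/4 gives the Eguchi–Hanson metric, and these configurations are not asymptotically euclidean multi-centred solutions of the required type.) -/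
open Real

set_option maxHeartbeats 1000000

/-- **The degenerate (`β₁ = β₂`) BGPP harmonic function is two-centred.**
With `β₃ < β₁`, `C > 0`, `a = √(C(β₁ − β₃))`, and `β > β₃`, `β ≠ β₁` satisfying
`ρ²/(β − β₁) + z²/(β − β₃) = C`, the function
`1/(|β − β₁| √(β − β₃) (ρ²/(β − β₁)² + z²/(β − β₃)²))` equals
`(1/(2√C))(1/√(ρ² + (z − a)²) + 1/√(ρ² + (z + a)²))` if `β > β₁`, and
`(1/(2√C))|1/√(ρ² + (z − a)²) − 1/√(ρ² + (z + a)²)|` if `β₃ < β < β₁`. -/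
theorem bgpp_degenerate_two_centred
    (β₃ β₁ C : ℝ) (h31 : β₃ < β₁) (hC : 0 < C)
    (ρ z β : ℝ) (hβ3 : β₃ < β) (hβ1 : β ≠ β₁)
    (hroot : ρ ^ 2 / (β - β₁) + z ^ 2 / (β - β₃) = C) :
    (β₁ < β →
      1 / (|β - β₁| * Real.sqrt (β - β₃) *
            (ρ ^ 2 / (β - β₁) ^ 2 + z ^ 2 / (β - β₃) ^ 2))
        = (1 / (2 * Real.sqrt C)) *
            (1 / Real.sqrt (ρ ^ 2 + (z - Real.sqrt (C * (β₁ - β₃))) ^ 2)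
              + 1 / Real.sqrt (ρ ^ 2 + (z + Real.sqrt (C * (β₁ - β₃))) ^ 2)))
    ∧ (β₃ < β ∧ β < β₁ →
      1 / (|β - β₁| * Real.sqrt (β - β₃) *
            (ρ ^ 2 / (β - β₁) ^ 2 + z ^ 2 / (β - β₃) ^ 2))
        = (1 / (2 * Real.sqrt C)) *
            |1 / Real.sqrt (ρ ^ 2 + (z - Real.sqrt (C * (β₁ - β₃))) ^ 2)
              - 1 / Real.sqrt (ρ ^ 2 + (z + Real.sqrt (C * (β₁ - β₃))) ^ 2)|) := by
  have hv : (0:ℝ) < β - β₃ := sub_pos.mpr hβ3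
  have hu0 : β - β₁ ≠ 0 := sub_ne_zero.mpr hβ1
  have hdpos : (0:ℝ) < β₁ - β₃ := sub_pos.mpr h31
  obtain ⟨s, hs⟩ : ∃ s : ℝ, s = Real.sqrt (C * (β - β₃)) := ⟨_, rfl⟩
  obtain ⟨w, hw⟩ : ∃ w : ℝ, w = Real.sqrt ((β₁ - β₃) / (β - β₃)) := ⟨_, rfl⟩
  have hspos : 0 < s := hs ▸ Real.sqrt_pos.mpr (by positivity)
  have hwpos : 0 < w := hw ▸ Real.sqrt_pos.mpr (by positivity)
  have hs2 : s ^ 2 = C * (β - β₃) := by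
    rw [hs]; exact Real.sq_sqrt (by positivity)
  have hw2' : w ^ 2 * (β - β₃) = β₁ - β₃ := by
    rw [hw, Real.sq_sqrt (by positivity : (0:ℝ) ≤ (β₁ - β₃) / (β - β₃))]
    field_simp
  have ha : Real.sqrt (C * (β₁ - β₃)) = s * w := by
    rw [hs, hw, ← Real.sqrt_mul (by positivity : (0:ℝ) ≤ C * (β - β₃))]
    congr 1
    field_simp
  have hr' : ρ ^ 2 * (β - β₃) = (β - β₁) * (C * (β - β₃) - z ^ 2) := by
    field_simp [hu0, hv.ne'] at hroot
    linear_combination hroot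
  -- the two completing-the-square identities
  have key1 : ρ ^ 2 + (z - Real.sqrt (C * (β₁ - β₃))) ^ 2 = (s - z * w) ^ 2 := by
    rw [ha]
    apply mul_right_cancel₀ (b := β - β₃) hv.ne'
    linear_combination hr' + ((w ^ 2 - 1) * (β - β₃)) * hs2
      + (C * (β - β₃) - z ^ 2) * hw2'
  have key2 : ρ ^ 2 + (z + Real.sqrt (C * (β₁ - β₃))) ^ 2 = (s + z * w) ^ 2 := by
    rw [ha]
    apply mul_right_cancel₀ (b := β - β₃) hv.ne'
    linear_combination hr' + ((w ^ 2 - 1) * (β - β₃)) * hs2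
      + (C * (β - β₃) - z ^ 2) * hw2'
  -- nondegeneracy
  have hnz : ρ ≠ 0 ∨ z ≠ 0 := by
    by_contra h
    push_neg at h
    rw [h.1, h.2] at hroot
    norm_num at hroot
    exact hC.ne' hroot.symm
  have hP : 0 < ρ ^ 2 * (β - β₃) ^ 2 + z ^ 2 * (β - β₁) ^ 2 := by
    have hv' : β - β₃ ≠ 0 := hv.ne'
    rcases hnz with h | h
    · positivity
    · positivity
  have hD : 0 < ρ ^ 2 / (β - β₁) ^ 2 + z ^ 2 / (β - β₃) ^ 2 := by
    have h1 : ρ ^ 2 / (β - β₁) ^ 2 + z ^ 2 / (β - β₃) ^ 2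
        = (ρ ^ 2 * (β - β₃) ^ 2 + z ^ 2 * (β - β₁) ^ 2) / ((β - β₁) ^ 2 * (β - β₃) ^ 2) := by
      field_simp
    rw [h1]
    positivity
  obtain ⟨D, hDdef⟩ : ∃ D : ℝ, D = ρ ^ 2 / (β - β₁) ^ 2 + z ^ 2 / (β - β₃) ^ 2 := ⟨_, rfl⟩
  rw [← hDdef] at hD ⊢
  have hE0 : (s ^ 2 - (z * w) ^ 2) * ((β - β₁) * (β - β₃))
      = ρ ^ 2 * (β - β₃) ^ 2 + z ^ 2 * (β - β₁) ^ 2 := by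
    linear_combination ((β - β₁) * (β - β₃)) * hs2 - ((β - β₁) * z ^ 2) * hw2'
      - (β - β₃) * hr'
  have hE : s ^ 2 - (z * w) ^ 2 = (β - β₁) * (β - β₃) * D := by
    rw [hDdef]
    field_simp
    linear_combination hE0
  have hsv : s * Real.sqrt (β - β₃) = Real.sqrt C * (β - β₃) := by
    rw [hs, Real.sqrt_mul hC.le, mul_assoc, Real.mul_self_sqrt hv.le]
  have hsvpos : 0 < Real.sqrt (β - β₃) := Real.sqrt_pos.mpr hv
  have hscpos : 0 < Real.sqrt C := Real.sqrt_pos.mpr hC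
  -- shared endgame
  have fin : ∀ A : ℝ, A ≠ 0 →
      1 / (A * Real.sqrt (β - β₃) * D) = 1 / (2 * Real.sqrt C) * (2 * s / (A * (β - β₃) * D)) := by
    intro A hA
    have hDne : D ≠ 0 := hD.ne'
    rw [div_mul_div_comm, div_eq_div_iff
        (mul_ne_zero (mul_ne_zero hA hsvpos.ne') hDne)
        (mul_ne_zero (by positivity) (mul_ne_zero (mul_ne_zero hA hv.ne') hDne))]
    linear_combination (-(2 * A * D)) * hsv
  constructor
  · intro hb
    have hu : 0 < β - β₁ := sub_pos.mpr hb
    have hEpos : 0 < s ^ 2 - (z * w) ^ 2 := by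
      by_contra hcon
      push_neg at hcon
      have := mul_nonpos_of_nonpos_of_nonneg hcon (mul_pos hu hv).le
      rw [hE0] at this
      linarith
    have htlt : |z * w| < s := by
      refine lt_of_pow_lt_pow_left₀ 2 hspos.le ?_
      rw [sq_abs]; linarith
    have h1 : 0 < s - z * w := by linarith [le_abs_self (z * w)]
    have h2 : 0 < s + z * w := by linarith [neg_abs_le (z * w)]
    rw [key1, key2, Real.sqrt_sq_eq_abs, Real.sqrt_sq_eq_abs,
      abs_of_pos h1, abs_of_pos h2, abs_of_pos hu]
    have hsum : 1 / (s - z * w) + 1 / (s + z * w) = 2 * s / ((β - β₁) * (β - β₃) * D) := by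
      rw [div_add_div _ _ h1.ne' h2.ne']
      congr 1
      · ring
      · linear_combination hE
    rw [hsum]
    exact fin _ hu.ne'
  · rintro ⟨-, hb⟩
    have hu : β - β₁ < 0 := sub_neg.mpr hb
    have habs : |β - β₁| = -(β - β₁) := abs_of_neg hu
    have hApos : (0:ℝ) < -(β - β₁) := by linarith
    have hEneg : s ^ 2 - (z * w) ^ 2 < 0 := by
      by_contra hcon
      push_neg at hcon
      have := mul_nonpos_of_nonneg_of_nonpos hcon
        (mul_nonpos_of_nonpos_of_nonneg hu.le hv.le)
      rw [hE0] at this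
      linarith
    have htgt : s < |z * w| := by
      refine lt_of_pow_lt_pow_left₀ 2 (abs_nonneg _) ?_
      rw [sq_abs]; linarith
    have hsub : ∀ a b : ℝ, a ≠ 0 → b ≠ 0 → 1 / a - 1 / b = (b - a) / (a * b) := by
      intro a b ha hb
      field_simp
    rw [key1, key2, Real.sqrt_sq_eq_abs, Real.sqrt_sq_eq_abs, habs]
    rcases le_or_gt 0 (z * w) with hzw | hzw
    · have habs' : |z * w| = z * w := abs_of_nonneg hzw
      have h1 : s - z * w < 0 := by rw [habs'] at htgt; linarith
      have h2 : 0 < s + z * w := by linarith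
      rw [abs_of_neg h1, abs_of_pos h2]
      have hmono : 1 / (s + z * w) ≤ 1 / -(s - z * w) :=
        one_div_le_one_div_of_le (by linarith) (by linarith)
      rw [abs_of_nonneg (by linarith)]
      have hsum : 1 / -(s - z * w) - 1 / (s + z * w)
          = 2 * s / (-(β - β₁) * (β - β₃) * D) := by
        rw [hsub _ _ (by linarith) h2.ne']
        congr 1
        · ring
        · linear_combination -hE
      rw [hsum]
      exact fin _ hApos.ne'
    · have habs' : |z * w| = -(z * w) := abs_of_neg hzw
      have h1 : 0 < s - z * w := by linarith
      have h2 : s + z * w < 0 := by rw [habs'] at htgt; linarith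
      rw [abs_of_pos h1, abs_of_neg h2]
      have hsum : 1 / (s - z * w) - 1 / -(s + z * w)
          = -(2 * s) / (-(β - β₁) * (β - β₃) * D) := by
        rw [hsub _ _ h1.ne' (by linarith)]
        congr 1
        · ring
        · linear_combination -hE
      have hge : 0 ≤ 2 * s / (-(β - β₁) * (β - β₃) * D) :=
        div_nonneg (by linarith) (mul_pos (mul_pos hApos hv) hD).le
      rw [hsum, neg_div, abs_neg, abs_of_nonneg hge]
      exact fin _ hApos.ne'
end

section
/- Let (x, y, z) ∈ ℝ³ with ρ² := x² + y² > 0 and z ≠ 0, and set β := (ρ²·β₃ + z²·β₁)/(ρ² + z²). Then β satisfies ρ²/(β − β₁) + z²/(β − β₃) = 0 with β₃ < β < β₁, and 1/( |β − β₁| · √(β − β₃) · ( ρ²/(β − β₁)² + z²/(β − β₃)² ) ) = √(β₁ − β₃) · |z| / (ρ² + z²)^{3/2}. (This is the C = 0 case of the BGPP harmonic function with β₁ = β₂: H is a constant multiple of z/r³, so it does not have a simple pole and gives no multi-centred solution.) -/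
/-!
Writing `ρ² = a`, `z² = b` and `d = β₁ - β₃`, the weighted mean `β` has `β₁ - β = a d / (a + b)` and
`β - β₃ = b d / (a + b)`, so both terms of the root equation equal `∓ (a + b) / d`. At any root, `b/v = a/u`
with `u = β₁ - β`, `v = β - β₃` collapses `a/u² + b/v²` to `(a/u)(u + v)/(u v)`, and the harmonic
function becomes `u √v / (a d)`; for the weighted mean this is `√v / (a + b) = |z| √d / (a + b)^{3/2}`.
-/

open Real

namespace BGPP

variable {a b : ℝ}

lemma sub_weightedMean (β₃ β₁ : ℝ) (hab : a + b ≠ 0) :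
    β₁ - (a * β₃ + b * β₁) / (a + b) = a * (β₁ - β₃) / (a + b) := by
  field_simp
  ring

lemma weightedMean_sub (β₃ β₁ : ℝ) (hab : a + b ≠ 0) :
    (a * β₃ + b * β₁) / (a + b) - β₃ = b * (β₁ - β₃) / (a + b) := by
  field_simp
  ring

lemma weightedMean_isRoot {β₃ β₁ : ℝ} (ha : a ≠ 0) (hb : b ≠ 0) (hab : a + b ≠ 0)
    (h31 : β₃ ≠ β₁) :
    a / ((a * β₃ + b * β₁) / (a + b) - β₁) + b / ((a * β₃ + b * β₁) / (a + b) - β₃) = 0 := by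
  have hd : β₁ - β₃ ≠ 0 := sub_ne_zero.mpr h31.symm
  rw [← neg_sub β₁, sub_weightedMean β₃ β₁ hab, weightedMean_sub β₃ β₁ hab]
  field_simp
  ring

lemma weightedMean_mem_Ioo {β₃ β₁ : ℝ} (ha : 0 < a) (hb : 0 < b) (h31 : β₃ < β₁) :
    (a * β₃ + b * β₁) / (a + b) ∈ Set.Ioo β₃ β₁ := by
  have hab : a + b ≠ 0 := (add_pos ha hb).ne'
  have hd : 0 < β₁ - β₃ := sub_pos.mpr h31
  have hu := sub_weightedMean β₃ β₁ hab
  have hv := weightedMean_sub β₃ β₁ hab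
  have : 0 < a * (β₁ - β₃) / (a + b) := by positivity
  have : 0 < b * (β₁ - β₃) / (a + b) := by positivity
  constructor <;> linarith

lemma harmonic_eq_of_isRoot {β₃ β₁ β : ℝ} (h3 : β₃ < β) (h1 : β < β₁) (ha : a ≠ 0)
    (hroot : a / (β - β₁) + b / (β - β₃) = 0) :
    1 / (|β - β₁| * √(β - β₃) * (a / (β - β₁) ^ 2 + b / (β - β₃) ^ 2))
      = (β₁ - β) * √(β - β₃) / (a * (β₁ - β₃)) := by
  rw [abs_sub_comm, show β - β₁ = -(β₁ - β) by ring,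
    show β₁ - β₃ = (β₁ - β) + (β - β₃) by ring] at *
  have hu : 0 < β₁ - β := sub_pos.mpr h1
  have hv : 0 < β - β₃ := sub_pos.mpr h3
  generalize β₁ - β = u at *
  generalize β - β₃ = v at *
  have hb : b = a * v / u := by
    field_simp at hroot ⊢
    linarith
  have hsqrt : 0 < √v := sqrt_pos.mpr hv
  have hsq : √v ^ 2 = v := sq_sqrt hv.le
  rw [abs_of_pos hu, hb]
  field_simp
  rw [hsq]
  ring

lemma rpow_three_halves {s : ℝ} (hs : 0 ≤ s) : s ^ ((3 : ℝ) / 2) = s * √s := by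
  rw [sqrt_eq_rpow, ← rpow_one_add' hs (by norm_num)]
  norm_num

end BGPP

open BGPP in
/-- **The `C = 0` case of the degenerate BGPP harmonic function.**
For `β₃ < β₁`, a point `(x, y, z)` with `ρ² = x² + y² > 0` and `z ≠ 0`, and
`β = (ρ² β₃ + z² β₁)/(ρ² + z²)`, one has `ρ²/(β − β₁) + z²/(β − β₃) = 0` with
`β₃ < β < β₁`, and the harmonic function equals `√(β₁ − β₃) |z| / (ρ² + z²)^{3/2}`,
a constant multiple of `z/r³`, so it has no simple pole. -/
theorem bgpp_degenerate_C_zero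
    (β₃ β₁ : ℝ) (h31 : β₃ < β₁)
    (x y z : ℝ) (hρ : 0 < x ^ 2 + y ^ 2) (hz : z ≠ 0)
    (β : ℝ) (hβ : β = ((x ^ 2 + y ^ 2) * β₃ + z ^ 2 * β₁) / ((x ^ 2 + y ^ 2) + z ^ 2)) :
    (x ^ 2 + y ^ 2) / (β - β₁) + z ^ 2 / (β - β₃) = 0
    ∧ β₃ < β ∧ β < β₁
    ∧ 1 / (|β - β₁| * Real.sqrt (β - β₃) *
          ((x ^ 2 + y ^ 2) / (β - β₁) ^ 2 + z ^ 2 / (β - β₃) ^ 2))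
        = Real.sqrt (β₁ - β₃) * |z| / ((x ^ 2 + y ^ 2) + z ^ 2) ^ ((3 : ℝ) / 2) := by
  have hz2 : 0 < z ^ 2 := by positivity
  have hs : 0 < x ^ 2 + y ^ 2 + z ^ 2 := by positivity
  have hd : 0 < β₁ - β₃ := sub_pos.mpr h31
  have hu := sub_weightedMean β₃ β₁ hs.ne'
  have hv := weightedMean_sub β₃ β₁ hs.ne'
  rw [← hβ] at hu hv
  obtain ⟨h3, h1⟩ := hβ ▸ weightedMean_mem_Ioo hρ hz2 h31
  have hroot := hβ ▸ weightedMean_isRoot hρ.ne' hz2.ne' hs.ne' h31.ne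
  refine ⟨hroot, h3, h1, ?_⟩
  rw [harmonic_eq_of_isRoot h3 h1 hρ.ne' hroot, rpow_three_halves hs.le, hv,
    sqrt_div' _ hs.le, sqrt_mul' _ hd.le, sqrt_sq_eq_abs, hu]
  have : 0 < √(x ^ 2 + y ^ 2 + z ^ 2) := sqrt_pos.mpr hs
  field_simp
end

section
/- Let K > 0 and define Φ(ρ, r, φ) := ( (K²·sinh²ρ − r²)/4 , (K/2)·r·sinh ρ·cos φ , (K/2)·r·cosh ρ·sin φ ) ∈ ℝ³. Then the set { Φ(ρ, r, φ) : ρ, φ ∈ ℝ, r ≥ 0, K²(cosh(4ρ) − 1) + 4r²(cosh(2ρ) + cos(2φ)) = 0 } equals the parabola { (−t²/4, 0, K·t/2) : t ∈ ℝ }. (Hence the singular set of the harmonic function of the E(2)-symmetric hyper-Kähler metric is a parabola in ℝ³, so its singularities are not isolated and the metric is not of multi-centred Gibbons–Hawking type.) -/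
/-!
Both terms of `K²(cosh 4ρ − 1) + 4r²(cosh 2ρ + cos 2φ) = 8K² sinh²ρ cosh²ρ + 8r²(sinh²ρ + cos²φ)`
are nonnegative, so the locus is cut out by `K sinh ρ = r sinh ρ = r cos φ = 0`. There
`Φ(ρ, r, φ)` is the parabola point with parameter `t = r sin φ`, and every `t` arises this way
with `ρ = 0`, `φ = ±π/2`.
-/

open Real

namespace E2Singular

/-- The map `Φ(ρ, r, φ)`, with its arguments in the order `ρ φ r` of the statement's binders. -/
noncomputable def coords (K ρ φ r : ℝ) : ℝ × ℝ × ℝ :=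
  ((K ^ 2 * sinh ρ ^ 2 - r ^ 2) / 4, K / 2 * r * sinh ρ * cos φ, K / 2 * r * cosh ρ * sin φ)

lemma cosh_four_mul_sub_one (x : ℝ) : cosh (4 * x) - 1 = 8 * (sinh x * cosh x) ^ 2 := by
  rw [show 4 * x = 2 * (2 * x) by ring, cosh_two_mul, cosh_sq', sinh_two_mul]
  ring

lemma cosh_two_mul_add_cos_two_mul (x y : ℝ) :
    cosh (2 * x) + cos (2 * y) = 2 * (sinh x ^ 2 + cos y ^ 2) := by
  rw [cosh_two_mul, cos_two_mul, cosh_sq']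
  ring

lemma singular_eq_zero_iff (K ρ φ r : ℝ) :
    K ^ 2 * (cosh (4 * ρ) - 1) + 4 * r ^ 2 * (cosh (2 * ρ) + cos (2 * φ)) = 0 ↔
      K * sinh ρ = 0 ∧ r * sinh ρ = 0 ∧ r * cos φ = 0 := by
  have hcosh : cosh ρ ≠ 0 := (cosh_pos ρ).ne'
  rw [cosh_four_mul_sub_one, cosh_two_mul_add_cos_two_mul,
    show K ^ 2 * (8 * (sinh ρ * cosh ρ) ^ 2) + 4 * r ^ 2 * (2 * (sinh ρ ^ 2 + cos φ ^ 2))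
      = 8 * ((K * sinh ρ * cosh ρ) ^ 2 + ((r * sinh ρ) ^ 2 + (r * cos φ) ^ 2)) by ring,
    mul_eq_zero, or_iff_right (by norm_num), add_eq_zero_iff_of_nonneg (sq_nonneg _) (by positivity),
    add_eq_zero_iff_of_nonneg (sq_nonneg _) (sq_nonneg _), sq_eq_zero_iff, sq_eq_zero_iff,
    sq_eq_zero_iff, mul_eq_zero (a := K * sinh ρ), or_iff_left hcosh]

lemma coords_eq_parabola {K ρ φ r : ℝ} (hK : K * sinh ρ = 0) (hρ : r * sinh ρ = 0)
    (hφ : r * cos φ = 0) :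
    coords K ρ φ r = (-(r * sin φ) ^ 2 / 4, 0, K * (r * sin φ) / 2) := by
  -- `r sinh ρ = 0` forces `r (cosh ρ - 1) = 0`, since `(cosh ρ + 1) (cosh ρ - 1) = sinh² ρ`.
  have hcosh : r * (cosh ρ - 1) = 0 := by
    have h : r * (cosh ρ - 1) * (cosh ρ + 1) = 0 := by
      linear_combination r * cosh_sq ρ + sinh ρ * hρ
    exact (mul_eq_zero.mp h).resolve_right (by linarith [one_le_cosh ρ])
  have hsin : (r * sin φ) ^ 2 = r ^ 2 := by
    linear_combination r ^ 2 * sin_sq_add_cos_sq φ - r * cos φ * hφ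
  simp only [coords, Prod.mk.injEq]
  refine ⟨?_, ?_, ?_⟩
  · linear_combination K * sinh ρ * hK / 4 + hsin / 4
  · linear_combination K / 2 * cos φ * hρ
  · linear_combination K / 2 * sin φ * hcosh

lemma exists_cos_eq_zero_and_nonneg_mul_sin_eq (t : ℝ) :
    ∃ φ r : ℝ, 0 ≤ r ∧ cos φ = 0 ∧ r * sin φ = t := by
  rcases le_or_gt 0 t with ht | ht
  · exact ⟨π / 2, t, ht, cos_pi_div_two, by rw [sin_pi_div_two, mul_one]⟩
  · exact ⟨-(π / 2), -t, by linarith, by rw [cos_neg, cos_pi_div_two],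
      by rw [sin_neg, sin_pi_div_two]; ring⟩

end E2Singular

open E2Singular in
theorem E2_singular_set_is_parabola_general (K : ℝ) :
    { p : ℝ × ℝ × ℝ | ∃ ρ φ r : ℝ, 0 ≤ r ∧
        K ^ 2 * (Real.cosh (4 * ρ) - 1)
          + 4 * r ^ 2 * (Real.cosh (2 * ρ) + Real.cos (2 * φ)) = 0 ∧
        p = ((K ^ 2 * Real.sinh ρ ^ 2 - r ^ 2) / 4,
              K / 2 * r * Real.sinh ρ * Real.cos φ,
              K / 2 * r * Real.cosh ρ * Real.sin φ) }
      = { p : ℝ × ℝ × ℝ | ∃ t : ℝ, p = (-t ^ 2 / 4, 0, K * t / 2) } := by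
  ext p
  constructor
  · rintro ⟨ρ, φ, r, -, hsing, rfl⟩
    obtain ⟨hK, hρ, hφ⟩ := (singular_eq_zero_iff K ρ φ r).mp hsing
    exact ⟨r * sin φ, coords_eq_parabola hK hρ hφ⟩
  · rintro ⟨t, rfl⟩
    obtain ⟨φ, r, hr, hφ, rfl⟩ := exists_cos_eq_zero_and_nonneg_mul_sin_eq t
    have hsinh : ∀ c : ℝ, c * sinh 0 = 0 := by simp
    have hcos : r * cos φ = 0 := by rw [hφ, mul_zero]
    exact ⟨0, φ, r, hr, (singular_eq_zero_iff K 0 φ r).mpr ⟨hsinh K, hsinh r, hcos⟩,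
      (coords_eq_parabola (hsinh K) (hsinh r) hcos).symm⟩

/-- **The singular set of the `E(2)`-symmetric harmonic function is a parabola.**
For `K > 0` and `Φ(ρ, r, φ) = ((K² sinh²ρ − r²)/4, (K/2) r sinh ρ cos φ, (K/2) r cosh ρ sin φ)`,
the image under `Φ` of the set where `K²(cosh 4ρ − 1) + 4r²(cosh 2ρ + cos 2φ) = 0` (with `r ≥ 0`)
is exactly the parabola `{(−t²/4, 0, Kt/2) : t ∈ ℝ}` in `ℝ³`. -/
theorem E2_singular_set_is_parabola (K : ℝ) (hK : 0 < K) :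
    { p : ℝ × ℝ × ℝ | ∃ ρ φ r : ℝ, 0 ≤ r ∧
        K ^ 2 * (Real.cosh (4 * ρ) - 1)
          + 4 * r ^ 2 * (Real.cosh (2 * ρ) + Real.cos (2 * φ)) = 0 ∧
        p = ((K ^ 2 * Real.sinh ρ ^ 2 - r ^ 2) / 4,
              K / 2 * r * Real.sinh ρ * Real.cos φ,
              K / 2 * r * Real.cosh ρ * Real.sin φ) }
      = { p : ℝ × ℝ × ℝ | ∃ t : ℝ, p = (-t ^ 2 / 4, 0, K * t / 2) } :=
  E2_singular_set_is_parabola_general K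
end

section
/- For every point x₀ on the straight line through a and b with x₀ ≠ a and x₀ ≠ b, the vector field B(x) tends to 0 as x tends to x₀ through points x with c × (x − b) ≠ 0. (This is the statement that, in contrast to the 1-forms βᵢ, the Bena–Warner 1-forms β_{ij} are free of Dirac string singularities: they are regular on ℝ³ except at the two centres a and b.) -/
open scoped RealInnerProductSpace

/-- The scalar function `g` entering the Bena–Warner 1-form `β_{ab}`, with `c = a − b`:
`g(x) = ⟨x−a, c⟩/(‖c‖‖x−a‖) − ⟨x−b, c⟩/(‖c‖‖x−b‖) − ⟨x−a, x−b⟩/(‖x−a‖‖x−b‖) + 1`. -/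
noncomputable def benaWarnerG (a b x : EuclideanSpace ℝ (Fin 3)) : ℝ :=
  ⟪x - a, a - b⟫ / (‖a - b‖ * ‖x - a‖) - ⟪x - b, a - b⟫ / (‖a - b‖ * ‖x - b‖)
    - ⟪x - a, x - b⟫ / (‖x - a‖ * ‖x - b‖) + 1

/-- The Bena–Warner vector field `B(x) = g(x) (c × (x − b)) / ‖c × (x − b)‖²`. -/
noncomputable def benaWarnerB (a b x : EuclideanSpace ℝ (Fin 3)) :
    EuclideanSpace ℝ (Fin 3) :=
  (benaWarnerG a b x / ‖cross3 (a - b) (x - b)‖ ^ 2) • cross3 (a - b) (x - b)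

lemma cross3_inner (c u v : EuclideanSpace ℝ (Fin 3)) :
    ⟪cross3 c u, cross3 c v⟫ = ⟪c,c⟫ * ⟪u,v⟫ - ⟪c,u⟫ * ⟪c,v⟫ := by
  simp [cross3, cross_apply, PiLp.inner_apply, Fin.sum_univ_three, RCLike.inner_apply,
    WithLp.equiv_symm_apply, WithLp.equiv_apply, EuclideanSpace.norm_sq_eq]
  ring

lemma cross3_smul_right (c : EuclideanSpace ℝ (Fin 3)) (t : ℝ) : cross3 c (t • c) = 0 := by
  ext i
  fin_cases i <;>
    simp [cross3, cross_apply, WithLp.equiv_symm_apply, WithLp.equiv_apply]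

lemma cross3_sub_self (c v : EuclideanSpace ℝ (Fin 3)) : cross3 c (v - c) = cross3 c v := by
  ext i
  fin_cases i <;>
  · simp [cross3, cross_apply, WithLp.equiv_symm_apply, WithLp.equiv_apply]
    ring

lemma cross3_neg_left (a b : EuclideanSpace ℝ (Fin 3)) : cross3 (-a) b = -(cross3 a b) := by
  ext i
  fin_cases i <;>
    simp [cross3, cross_apply, WithLp.equiv_symm_apply, WithLp.equiv_apply]

lemma cross3_continuous (c : EuclideanSpace ℝ (Fin 3)) : Continuous (cross3 c) := by
  unfold cross3
  exact (PiLp.continuous_toLp 2 _).comp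
    ((crossProduct ((WithLp.equiv 2 _) c)).continuous_of_finiteDimensional.comp
      (PiLp.continuous_ofLp 2 _))

lemma cross3_k2 (c x : EuclideanSpace ℝ (Fin 3)) :
    ‖cross3 c x‖^2 = ‖c‖^2 * ‖x‖^2 - ⟪x, c⟫^2 := by
  have h := cross3_inner c x x
  rw [real_inner_self_eq_norm_sq, real_inner_self_eq_norm_sq, real_inner_self_eq_norm_sq] at h
  rw [h, real_inner_comm]; ring

lemma cross3_k3 (c u v : EuclideanSpace ℝ (Fin 3)) :
    ‖c‖^2 * ⟪u, v⟫ = ⟪u, c⟫ * ⟪v, c⟫ + ⟪cross3 c u, cross3 c v⟫ := by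
  have h := cross3_inner c u v
  rw [real_inner_self_eq_norm_sq] at h
  rw [h, real_inner_comm c u, real_inner_comm c v]; ring

lemma cross3_swap_shift (a b x : EuclideanSpace ℝ (Fin 3)) :
    cross3 (b - a) (x - a) = -(cross3 (a - b) (x - b)) := by
  have h : x - a = (x - b) - (a - b) := by abel
  rw [show b - a = -(a - b) by abel, h, cross3_neg_left, cross3_sub_self]

lemma benaWarnerG_swap (a b x : EuclideanSpace ℝ (Fin 3)) :
    benaWarnerG b a x = benaWarnerG a b x := by
  unfold benaWarnerG
  rw [show b - a = -(a - b) by abel]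
  simp only [inner_neg_right, norm_neg]
  rw [real_inner_comm (x - b) (x - a)]
  ring

lemma benaWarnerB_swap (a b x : EuclideanSpace ℝ (Fin 3)) :
    benaWarnerB b a x = -(benaWarnerB a b x) := by
  unfold benaWarnerB
  rw [benaWarnerG_swap, cross3_swap_shift, norm_neg, smul_neg]

lemma benaWarner_real_aux (p q r nu nv nc nw : ℝ) (hnu : nu ≠ 0) (hnv : nv ≠ 0) (hnc : nc ≠ 0)
    (hnw : nw ≠ 0) (hD : nc*nu - p ≠ 0)
    (k2 : nw^2 = nc^2*nu^2 - p^2) (k3 : nc^2*r = p*q + nw^2) :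
    (p/(nc*nu) - q/(nc*nv) - r/(nu*nv) + 1) / nw
      = nw * (1 - q/(nc*nv)) / (nc^2*nu^2*(1 - p/(nc*nu))) - nw/(nu*nv*nc^2) := by
  have h1A : 1 - p/(nc*nu) ≠ 0 := by
    intro h; apply hD
    have : p/(nc*nu) = 1 := by linarith
    field_simp at this; linarith
  field_simp
  linear_combination (-(nc*nu - p)) * k3
    + (-(nc*nv - q)) * k2

theorem benaWarner_aux (a b : EuclideanSpace ℝ (Fin 3)) (hab : a ≠ b)
    (x₀ : EuclideanSpace ℝ (Fin 3)) (t : ℝ) (ht : x₀ = b + t • (a - b))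
    (ht1 : t < 1) (ht0 : t ≠ 0) :
    Filter.Tendsto (benaWarnerB a b)
      (nhdsWithin x₀ { x | cross3 (a - b) (x - b) ≠ 0 }) (nhds 0) := by
  have hc : a - b ≠ 0 := sub_ne_zero.mpr hab
  have hnc : ‖a - b‖ ≠ 0 := norm_ne_zero_iff.mpr hc
  have hxa : x₀ - a = (t - 1) • (a - b) := by rw [ht]; module
  have hxb : x₀ - b = t • (a - b) := by rw [ht]; module
  have hu0 : ‖x₀ - a‖ ≠ 0 := by
    rw [hxa, norm_smul, Real.norm_eq_abs]
    exact mul_ne_zero (abs_ne_zero.mpr (sub_ne_zero.mpr (ne_of_lt ht1))) hnc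
  have hv0 : ‖x₀ - b‖ ≠ 0 := by
    rw [hxb, norm_smul, Real.norm_eq_abs]
    exact mul_ne_zero (abs_ne_zero.mpr ht0) hnc
  have hw0 : cross3 (a - b) (x₀ - b) = 0 := by rw [hxb]; exact cross3_smul_right _ t
  have hA0 : ⟪x₀ - a, a - b⟫ / (‖a - b‖ * ‖x₀ - a‖) = -1 := by
    rw [hxa, real_inner_smul_left, real_inner_self_eq_norm_sq, norm_smul, Real.norm_eq_abs,
      abs_of_neg (by linarith : t - 1 < 0)]
    rw [div_eq_iff (by
      apply mul_ne_zero hnc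
      exact mul_ne_zero (neg_ne_zero.mpr (sub_ne_zero.mpr (ne_of_lt ht1))) hnc)]
    ring
  set E : EuclideanSpace ℝ (Fin 3) → ℝ := fun x =>
    ‖cross3 (a - b) (x - b)‖ * (1 - ⟪x - b, a - b⟫ / (‖a - b‖ * ‖x - b‖)) /
        (‖a - b‖^2 * ‖x - a‖^2 * (1 - ⟪x - a, a - b⟫ / (‖a - b‖ * ‖x - a‖)))
      - ‖cross3 (a - b) (x - b)‖ / (‖x - a‖ * ‖x - b‖ * ‖a - b‖^2) with hE_def
  have hcontA : ContinuousAt (fun x => ⟪x - a, a - b⟫ / (‖a - b‖ * ‖x - a‖)) x₀ :=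
    ContinuousAt.div (((continuous_id.sub continuous_const).inner continuous_const).continuousAt)
      ((continuous_const.mul (continuous_id.sub continuous_const).norm).continuousAt)
      (mul_ne_zero hnc hu0)
  have hcontB : ContinuousAt (fun x => ⟪x - b, a - b⟫ / (‖a - b‖ * ‖x - b‖)) x₀ :=
    ContinuousAt.div (((continuous_id.sub continuous_const).inner continuous_const).continuousAt)
      ((continuous_const.mul (continuous_id.sub continuous_const).norm).continuousAt)
      (mul_ne_zero hnc hv0)
  have hcontW : ContinuousAt (fun x => ‖cross3 (a - b) (x - b)‖) x₀ :=
    (((cross3_continuous (a - b)).comp (continuous_id.sub continuous_const)).norm).continuousAt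
  have hcontNu : ContinuousAt (fun x : EuclideanSpace ℝ (Fin 3) => ‖x - a‖) x₀ :=
    ((continuous_id.sub continuous_const).norm).continuousAt
  have hcontNv : ContinuousAt (fun x : EuclideanSpace ℝ (Fin 3) => ‖x - b‖) x₀ :=
    ((continuous_id.sub continuous_const).norm).continuousAt
  have h1A0 : (1 : ℝ) - ⟪x₀ - a, a - b⟫ / (‖a - b‖ * ‖x₀ - a‖) ≠ 0 := by
    rw [hA0]; norm_num
  have hcontE : ContinuousAt E x₀ := by
    rw [hE_def]
    apply ContinuousAt.sub
    · exact ContinuousAt.div (hcontW.mul (continuousAt_const.sub hcontB))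
        (((continuousAt_const.mul (hcontNu.pow 2))).mul (continuousAt_const.sub hcontA))
        (mul_ne_zero (mul_ne_zero (pow_ne_zero 2 hnc) (pow_ne_zero 2 hu0)) h1A0)
    · exact ContinuousAt.div hcontW
        ((hcontNu.mul hcontNv).mul continuousAt_const)
        (mul_ne_zero (mul_ne_zero hu0 hv0) (pow_ne_zero 2 hnc))
  have hE0 : E x₀ = 0 := by
    rw [hE_def]; simp only; rw [hw0]; simp
  have hlimE : Filter.Tendsto E (nhdsWithin x₀ { x | cross3 (a - b) (x - b) ≠ 0 }) (nhds 0) := by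
    rw [← hE0]
    exact (hcontE.tendsto).mono_left nhdsWithin_le_nhds
  have hev : ∀ᶠ x in nhdsWithin x₀ { x | cross3 (a - b) (x - b) ≠ 0 },
      ‖benaWarnerB a b x‖ = |E x| := by
    have e1 : ∀ᶠ x in nhdsWithin x₀ { x | cross3 (a - b) (x - b) ≠ 0 }, ‖x - a‖ ≠ 0 :=
      ((hcontNu.eventually_ne hu0).filter_mono nhdsWithin_le_nhds)
    have e2 : ∀ᶠ x in nhdsWithin x₀ { x | cross3 (a - b) (x - b) ≠ 0 }, ‖x - b‖ ≠ 0 :=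
      ((hcontNv.eventually_ne hv0).filter_mono nhdsWithin_le_nhds)
    have e3 : ∀ᶠ x in nhdsWithin x₀ { x | cross3 (a - b) (x - b) ≠ 0 },
        ‖a - b‖ * ‖x - a‖ - ⟪x - a, a - b⟫ ≠ 0 := by
      have hval : ‖a - b‖ * ‖x₀ - a‖ - ⟪x₀ - a, a - b⟫ ≠ 0 := by
        intro h
        apply h1A0
        have : ⟪x₀ - a, a - b⟫ = ‖a - b‖ * ‖x₀ - a‖ := by linarith
        rw [this, div_self (mul_ne_zero hnc hu0)]
        ring
      have hcont : ContinuousAt (fun x => ‖a - b‖ * ‖x - a‖ - ⟪x - a, a - b⟫) x₀ :=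
        (continuousAt_const.mul hcontNu).sub
          (((continuous_id.sub continuous_const).inner continuous_const).continuousAt)
      exact ((hcont.eventually_ne hval).filter_mono nhdsWithin_le_nhds)
    have e4 : ∀ᶠ x in nhdsWithin x₀ { x | cross3 (a - b) (x - b) ≠ 0 },
        cross3 (a - b) (x - b) ≠ 0 := self_mem_nhdsWithin
    filter_upwards [e1, e2, e3, e4] with x hnu hnv hD hw
    have hnw : ‖cross3 (a - b) (x - b)‖ ≠ 0 := norm_ne_zero_iff.mpr hw
    have hsub : x - a = (x - b) - (a - b) := by abel
    have hcr : cross3 (a - b) (x - a) = cross3 (a - b) (x - b) := by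
      rw [hsub]; exact cross3_sub_self _ _
    have k2 : ‖cross3 (a - b) (x - b)‖^2 = ‖a - b‖^2 * ‖x - a‖^2 - ⟪x - a, a - b⟫^2 := by
      rw [← hcr]; exact cross3_k2 _ _
    have k3 : ‖a - b‖^2 * ⟪x - a, x - b⟫ = ⟪x - a, a - b⟫ * ⟪x - b, a - b⟫
        + ‖cross3 (a - b) (x - b)‖^2 := by
      have h := cross3_k3 (a - b) (x - a) (x - b)
      rw [hcr, real_inner_self_eq_norm_sq] at h
      exact h
    have hgE : benaWarnerG a b x / ‖cross3 (a - b) (x - b)‖ = E x := by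
      rw [hE_def, benaWarnerG]
      exact benaWarner_real_aux _ _ _ _ _ _ _ hnu hnv hnc hnw hD k2 k3
    rw [benaWarnerB, norm_smul, Real.norm_eq_abs, abs_div, abs_pow, abs_norm, ← hgE,
      abs_div, abs_norm]
    field_simp
  rw [tendsto_zero_iff_norm_tendsto_zero]
  apply Filter.Tendsto.congr' (hev.mono fun x h => h.symm)
  simpa using hlimE.abs

/-- **The Bena–Warner 1-forms `β_{ij}` have no Dirac string singularities.**
For distinct `a, b ∈ ℝ³` and every point `x₀` on the straight line through `a` and `b` with
`x₀ ≠ a` and `x₀ ≠ b`, the vector field `B` tends to `0` as `x → x₀` through points off the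
line (i.e. with `(a − b) × (x − b) ≠ 0`). -/
theorem benaWarner_no_dirac_string
    (a b : EuclideanSpace ℝ (Fin 3)) (hab : a ≠ b)
    (x₀ : EuclideanSpace ℝ (Fin 3)) (hline : ∃ t : ℝ, x₀ = b + t • (a - b))
    (hx₀a : x₀ ≠ a) (hx₀b : x₀ ≠ b) :
    Filter.Tendsto (benaWarnerB a b)
      (nhdsWithin x₀ { x | cross3 (a - b) (x - b) ≠ 0 }) (nhds 0) := by
  obtain ⟨t, ht⟩ := hline
  have ht1 : t ≠ 1 := by
    rintro rfl
    exact hx₀a (by rw [ht, one_smul]; abel)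
  have ht0 : t ≠ 0 := by
    rintro rfl
    exact hx₀b (by rw [ht, zero_smul, add_zero])
  rcases lt_or_ge t 1 with h | h
  · exact benaWarner_aux a b hab x₀ t ht h ht0
  · have ht' : x₀ = a + (1 - t) • (b - a) := by rw [ht]; module
    have h1 : (1 : ℝ) - t < 1 := by
      have : 1 < t := lt_of_le_of_ne h (Ne.symm ht1)
      linarith
    have h0 : (1 : ℝ) - t ≠ 0 := sub_ne_zero.mpr (Ne.symm ht1)
    have haux := benaWarner_aux b a hab.symm x₀ (1 - t) ht' h1 h0
    have hset : { x | cross3 (b - a) (x - a) ≠ 0 } = { x | cross3 (a - b) (x - b) ≠ 0 } := by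
      ext x
      simp only [Set.mem_setOf_eq]
      rw [cross3_swap_shift, neg_ne_zero]
    rw [hset] at haux
    have hneg := haux.neg
    rw [neg_zero] at hneg
    exact hneg.congr (fun x => by rw [benaWarnerB_swap a b x, neg_neg])
end
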